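/- arXiv:0804.2131 — 4 statements merged into one kernel-verified Lean document; each statement's English description precedes it below -/
import Mathlib

section
/- The action of S¹ on SU(3) given by z · A = diag(z^{p₁}, z^{p₂}, z^{p₃}) · A · diag(1, 1, z^{−p₁−p₂−p₃}), where p₁, p₂, p₃ are pairwise coprime positive integers, is a free group action. -/
/-!
Fixing `A` forces `(z ^ pᵢ - 1) * A i j = 0` for `j = 0, 1`. If `z ≠ 1`, coprimality allows at
most one `z ^ pᵢ` to equal `1`, so two rows of `A` vanish outside the last column and are proportional,
contradicting `det A = 1`.
-/

namespace Matrix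

variable {n : Type*} [Fintype n] [DecidableEq n]

theorem apply_eq_zero_of_diagonal_mul_mul_diagonal_eq_self {m R : Type*} [Fintype m]
    [DecidableEq m] [CommRing R] [NoZeroDivisors R] {d : n → R} {e : m → R} {A : Matrix n m R}
    (h : diagonal d * A * diagonal e = A) {i : n} {j : m} (hij : d i * e j ≠ 1) :
    A i j = 0 := by
  have hentry := congrFun (congrFun h i) j
  rw [mul_diagonal, diagonal_mul] at hentry
  have : (d i * e j - 1) * A i j = 0 := by linear_combination hentry
  exact (mul_eq_zero.mp this).resolve_left (sub_ne_zero.mpr hij)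

theorem det_eq_zero_of_rows_supported_on_column {K : Type*} [Field K] {A : Matrix n n K}
    {i i' : n} (hii' : i ≠ i') (c : n) (hi : ∀ j ≠ c, A i j = 0) (hi' : ∀ j ≠ c, A i' j = 0) :
    A.det = 0 := by
  by_cases hic : A i c = 0
  · exact det_eq_zero_of_row_eq_zero i fun j ↦ by
      rcases eq_or_ne j c with rfl | hj
      exacts [hic, hi j hj]
  · rw [← det_updateRow_add_smul_self A hii'.symm (-(A i' c / A i c))]
    refine det_eq_zero_of_row_eq_zero i' fun j ↦ ?_
    rcases eq_or_ne j c with rfl | hj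
    · simp [hic]
    · simp [hi j hj, hi' j hj]

end Matrix

theorem stmt_5_general (p₁ p₂ p₃ : ℕ)
    (h₁₂ : Nat.Coprime p₁ p₂) (h₁₃ : Nat.Coprime p₁ p₃) (h₂₃ : Nat.Coprime p₂ p₃)
    (z : Circle) (A : Matrix (Fin 3) (Fin 3) ℂ)
    (hA : A ∈ Matrix.specialUnitaryGroup (Fin 3) ℂ)
    (hfix : Matrix.diagonal ![(z : ℂ) ^ p₁, (z : ℂ) ^ p₂, (z : ℂ) ^ p₃] * A *
        Matrix.diagonal ![1, 1, ((z : ℂ) ^ (p₁ + p₂ + p₃))⁻¹] = A) :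
    z = 1 := by
  have hdet : A.det ≠ 0 := by
    rw [(Matrix.mem_specialUnitaryGroup_iff.mp hA).2]
    exact one_ne_zero
  have hrow : ∀ i, ![(z : ℂ) ^ p₁, (z : ℂ) ^ p₂, (z : ℂ) ^ p₃] i ≠ 1 → ∀ j ≠ 2, A i j = 0 :=
    fun i hi j hj ↦ Matrix.apply_eq_zero_of_diagonal_mul_mul_diagonal_eq_self hfix <| by
      fin_cases j <;> simp_all
  have hpair {a b : ℕ} (hab : a.Coprime b) (ha : (z : ℂ) ^ a = 1) (hb : (z : ℂ) ^ b = 1) :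
      z = 1 :=
    Circle.coe_eq_one.mp ((pow_eq_one_iff_of_coprime hab).mp ⟨ha, hb⟩)
  by_contra hz
  obtain ⟨i, i', hii', hi, hi'⟩ : ∃ i i' : Fin 3, i ≠ i' ∧
      ![(z : ℂ) ^ p₁, (z : ℂ) ^ p₂, (z : ℂ) ^ p₃] i ≠ 1 ∧
      ![(z : ℂ) ^ p₁, (z : ℂ) ^ p₂, (z : ℂ) ^ p₃] i' ≠ 1 := by
    by_cases h₁ : (z : ℂ) ^ p₁ = 1
    · exact ⟨1, 2, by decide, fun h₂ ↦ hz (hpair h₁₂ h₁ h₂), fun h₃ ↦ hz (hpair h₁₃ h₁ h₃)⟩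
    by_cases h₂ : (z : ℂ) ^ p₂ = 1
    · exact ⟨0, 2, by decide, h₁, fun h₃ ↦ hz (hpair h₂₃ h₂ h₃)⟩
    · exact ⟨0, 1, by decide, h₁, h₂⟩
  exact hdet (Matrix.det_eq_zero_of_rows_supported_on_column hii' 2 (hrow i hi) (hrow i' hi'))

/-- The circle action `z · A = diag(z^{p₁}, z^{p₂}, z^{p₃}) · A · diag(1, 1, z^{−p₁−p₂−p₃})`
on `SU(3)`, with `p₁, p₂, p₃` pairwise coprime positive integers, is free: the only
element fixing some `A ∈ SU(3)` is `z = 1`. -/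
theorem stmt_5 (p₁ p₂ p₃ : ℕ) (h₁ : 0 < p₁) (h₂ : 0 < p₂) (h₃ : 0 < p₃)
    (h₁₂ : Nat.Coprime p₁ p₂) (h₁₃ : Nat.Coprime p₁ p₃) (h₂₃ : Nat.Coprime p₂ p₃)
    (z : Circle) (A : Matrix (Fin 3) (Fin 3) ℂ)
    (hA : A ∈ Matrix.specialUnitaryGroup (Fin 3) ℂ)
    (hfix : Matrix.diagonal ![(z : ℂ) ^ p₁, (z : ℂ) ^ p₂, (z : ℂ) ^ p₃] * A *
        Matrix.diagonal ![1, 1, ((z : ℂ) ^ (p₁ + p₂ + p₃))⁻¹] = A) :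
    z = 1 :=
  stmt_5_general p₁ p₂ p₃ h₁₂ h₁₃ h₂₃ z A hA hfix
end

section
/- Every orbit of the T³-action on U(3) given by (z,u,v) · A = diag(z^{−p₂−p₃}, z^{−p₁−p₃}, z^{−p₁−p₂}) · A · diag(u, v, 1) intersects SU(3) ⊆ U(3), and the intersection of any such orbit with SU(3) is exactly one orbit of the T²-action on SU(3) given by (z,u) · A = diag(z^{p₁}, z^{p₂}, z^{p₃}) · A · diag(u, u^{−1}, z^{−p₁−p₂−p₃}). Consequently the orbit spaces U(3)/T³ and SU(3)/T² are in natural bijection. -/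
variable (p₁ p₂ p₃ : ℕ)

/-- The `T²`-orbit relation on `SU(3)`:
`(z,u) · A = diag(z^{p₁},z^{p₂},z^{p₃}) A diag(u,u⁻¹,z^{−p₁−p₂−p₃})`. -/
def orbT2 (A A' : Matrix (Fin 3) (Fin 3) ℂ) : Prop :=
  ∃ z u : Circle,
    A' = Matrix.diagonal ![(z : ℂ) ^ p₁, (z : ℂ) ^ p₂, (z : ℂ) ^ p₃] * A *
      Matrix.diagonal ![(u : ℂ), (u : ℂ)⁻¹, ((z : ℂ) ^ (p₁ + p₂ + p₃))⁻¹]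

/-- The `T³`-orbit relation on `U(3)`:
`(z,u,v) · A = diag(z^{−p₂−p₃},z^{−p₁−p₃},z^{−p₁−p₂}) A diag(u,v,1)`. -/
def orbT3 (A A' : Matrix (Fin 3) (Fin 3) ℂ) : Prop :=
  ∃ z u v : Circle,
    A' = Matrix.diagonal ![((z : ℂ) ^ (p₂ + p₃))⁻¹, ((z : ℂ) ^ (p₁ + p₃))⁻¹,
        ((z : ℂ) ^ (p₁ + p₂))⁻¹] * A * Matrix.diagonal ![(u : ℂ), (v : ℂ), 1]

/-! With `s = p₁ + p₂ + p₃`, the left factor of the `T³`-action is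
`z^{-s} diag(z^{p₁}, z^{p₂}, z^{p₃})`, and a scalar passes through `A` to the right factor. So both
actions read `A ↦ diag(z^{p₁}, z^{p₂}, z^{p₃}) A diag(e)`, with `e = z^{-s}(u, v, 1)` for `T³` and
`e = (u, u⁻¹, z^{-s})` for `T²`. Every right factor of the second kind is one of the first kind;
conversely, between matrices of equal nonzero determinant the first kind forces `uv = z^{2s}`,
which makes it one of the second kind. Every `T³`-orbit meets `SU(3)` since
`A ↦ A diag(det A⁻¹, 1, 1)` is part of the `T³`-action. -/

open Matrix

theorem Matrix.diagonal_mem_unitaryGroup {n α : Type*} [Fintype n] [DecidableEq n] [CommRing α]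
    [StarRing α] {d : n → α} (hd : ∀ i, d i ∈ unitary α) :
    diagonal d ∈ unitaryGroup n α := by
  rw [mem_unitaryGroup_iff, star_eq_conjTranspose, diagonal_conjTranspose, diagonal_mul_diagonal,
    ← diagonal_one]
  exact congrArg diagonal (funext fun i => Unitary.mul_star_self_of_mem (hd i))

theorem Matrix.diagonal_smul_mul_mul_diagonal {n α : Type*} [Fintype n] [DecidableEq n]
    [CommRing α] (c : α) (d e : n → α) (A : Matrix n n α) :
    diagonal (c • d) * A * diagonal e = diagonal d * A * diagonal (c • e) := by
  ext i j
  simp only [mul_diagonal, diagonal_mul, Pi.smul_apply, smul_eq_mul]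
  ring

theorem Circle.coe_mem_unitary (z : Circle) : (z : ℂ) ∈ unitary ℂ :=
  Unitary.mem_iff_star_mul_self.2 <| by
    rw [Complex.star_def, ← Circle.coe_inv_eq_conj, ← Circle.coe_mul, inv_mul_cancel,
      Circle.coe_one]

theorem exists_orbT3_mem_specialUnitaryGroup {A : Matrix (Fin 3) (Fin 3) ℂ}
    (hA : A ∈ unitaryGroup (Fin 3) ℂ) :
    ∃ A' ∈ specialUnitaryGroup (Fin 3) ℂ, orbT3 p₁ p₂ p₃ A A' := by
  let c : Circle := ⟨A.det, mem_sphere_zero_iff_norm.2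
    (CStarRing.norm_of_mem_unitary (det_of_mem_unitary hA))⟩
  have hD : diagonal ![((c⁻¹ : Circle) : ℂ), 1, 1] ∈ unitaryGroup (Fin 3) ℂ :=
    diagonal_mem_unitaryGroup fun i => by
      fin_cases i
      exacts [Circle.coe_mem_unitary _, one_mem _, one_mem _]
  refine ⟨A * diagonal ![((c⁻¹ : Circle) : ℂ), 1, 1],
    mem_specialUnitaryGroup_iff.2 ⟨mul_mem hA hD, ?_⟩, 1, c⁻¹, 1, ?_⟩
  · rw [det_mul, det_diagonal, Fin.prod_univ_three]
    simp only [cons_val_zero, cons_val_one, cons_val_two, head_cons, tail_cons, mul_one,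
      Circle.coe_inv]
    exact mul_inv_cancel₀ c.coe_ne_zero
  · have h1 : ![(1 : ℂ), 1, 1] = 1 := by ext i; fin_cases i <;> rfl
    simp [h1]

theorem inv_pow_add_vec_eq_smul {K : Type*} [Field K] {z : K} (hz : z ≠ 0) :
    ![(z ^ (p₂ + p₃))⁻¹, (z ^ (p₁ + p₃))⁻¹, (z ^ (p₁ + p₂))⁻¹] =
      (z ^ (p₁ + p₂ + p₃))⁻¹ • ![z ^ p₁, z ^ p₂, z ^ p₃] := by
  ext i
  fin_cases i <;>
    simp only [Fin.zero_eta, Fin.mk_one, Fin.reduceFinMk, cons_val_zero, cons_val_one, cons_val,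
      Pi.smul_apply, smul_eq_mul, pow_add] <;>
    field_simp

theorem orbT3_iff {A A' : Matrix (Fin 3) (Fin 3) ℂ} :
    orbT3 p₁ p₂ p₃ A A' ↔ ∃ z u v : Circle,
      A' = diagonal ![(z : ℂ) ^ p₁, (z : ℂ) ^ p₂, (z : ℂ) ^ p₃] * A *
        diagonal (((z : ℂ) ^ (p₁ + p₂ + p₃))⁻¹ • ![(u : ℂ), (v : ℂ), 1]) := by
  simp only [orbT3, inv_pow_add_vec_eq_smul _ _ _ (Circle.coe_ne_zero _),
    diagonal_smul_mul_mul_diagonal]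

theorem orbT3_of_orbT2 {A A' : Matrix (Fin 3) (Fin 3) ℂ} (h : orbT2 p₁ p₂ p₃ A A') :
    orbT3 p₁ p₂ p₃ A A' := by
  obtain ⟨z, u, rfl⟩ := h
  refine (orbT3_iff _ _ _).2 ⟨z, z ^ (p₁ + p₂ + p₃) * u, z ^ (p₁ + p₂ + p₃) * u⁻¹, ?_⟩
  congr 2
  ext i
  fin_cases i <;> simp [Circle.coe_ne_zero]

theorem orbT2_of_orbT3 {A A' : Matrix (Fin 3) (Fin 3) ℂ} (h : orbT3 p₁ p₂ p₃ A A')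
    (hdet : A'.det = A.det) (hA : A.det ≠ 0) : orbT2 p₁ p₂ p₃ A A' := by
  obtain ⟨z, u, v, rfl⟩ := (orbT3_iff _ _ _).1 h
  have huv : (u : ℂ) * v = ((z : ℂ) ^ (p₁ + p₂ + p₃)) ^ 2 := by
    -- `hdet` reads `z^s · det A · z^{-3s} u v = det A`
    simp only [det_mul, det_diagonal, Fin.prod_univ_three, cons_val_zero, cons_val_one, cons_val,
      Pi.smul_apply, smul_eq_mul, mul_one, pow_add] at hdet
    field_simp at hdet
    linear_combination hdet
  refine ⟨z, (z ^ (p₁ + p₂ + p₃))⁻¹ * u, ?_⟩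
  congr 2
  ext i
  fin_cases i <;>
    simp only [Fin.zero_eta, Fin.mk_one, Fin.reduceFinMk, cons_val_zero, cons_val_one, cons_val,
      Pi.smul_apply, smul_eq_mul, mul_one, Circle.coe_mul, Circle.coe_inv, Circle.coe_pow]
  field_simp
  linear_combination huv

theorem stmt_7 :
    (∀ A ∈ Matrix.unitaryGroup (Fin 3) ℂ,
      ∃ A' ∈ Matrix.specialUnitaryGroup (Fin 3) ℂ, orbT3 p₁ p₂ p₃ A A') ∧
    (∀ A ∈ Matrix.specialUnitaryGroup (Fin 3) ℂ,
      ∀ A' ∈ Matrix.specialUnitaryGroup (Fin 3) ℂ,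
        (orbT3 p₁ p₂ p₃ A A' ↔ orbT2 p₁ p₂ p₃ A A')) := by
  refine ⟨fun A hA => exists_orbT3_mem_specialUnitaryGroup p₁ p₂ p₃ hA, fun A hA A' hA' => ?_⟩
  have hdetA : A.det = 1 := (mem_specialUnitaryGroup_iff.1 hA).2
  have hdetA' : A'.det = 1 := (mem_specialUnitaryGroup_iff.1 hA').2
  exact ⟨fun h => orbT2_of_orbT3 p₁ p₂ p₃ h (hdetA'.trans hdetA.symm) (by simp [hdetA]),
    orbT3_of_orbT2 p₁ p₂ p₃⟩
end

section
/- Let p₁, p₂, p₃ be pairwise coprime positive integers. Define qᵢ = (p_{i+1} + p_{i+2})/2 if all pᵢ are odd, and qᵢ = p_{i+1} + p_{i+2} otherwise (indices mod 3). Then if all pᵢ are odd, each p_{i+1} + p_{i+2} is even, so the qᵢ are positive integers in both cases, and gcd(q₁, q₂, q₃) = 1. -/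
theorem Int.odd_of_isCoprime_of_even {x y : ℤ} (h : IsCoprime x y) (hx : Even x) : Odd y :=
  Int.isCoprime_two_left.mp (h.of_isCoprime_of_dvd_left hx.two_dvd)

theorem dvd_two_mul_of_dvd_pairwise_sums {R : Type*} [CommRing R] {d a b c : R}
    (hbc : d ∣ b + c) (hca : d ∣ c + a) (hab : d ∣ a + b) : d ∣ 2 * a := by
  have h : 2 * a = (c + a) + (a + b) - (b + c) := by ring
  exact h ▸ dvd_sub (dvd_add hca hab) hbc

/-- An odd common divisor of `2b` and `2c` divides `b` and `c`; oddness comes from `d ∣ a + b`. -/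
theorem Int.isUnit_of_dvd_pairwise_sums {d a b c : ℤ} (hbc : IsCoprime b c) (ha : Even a)
    (hb : Odd b) (hd₁ : d ∣ b + c) (hd₂ : d ∣ c + a) (hd₃ : d ∣ a + b) : IsUnit d := by
  have hd : IsCoprime d 2 :=
    (Int.isCoprime_two_right.mpr (ha.add_odd hb)).of_isCoprime_of_dvd_left hd₃
  exact hbc.isUnit_of_dvd'
    (hd.dvd_of_dvd_mul_left (dvd_two_mul_of_dvd_pairwise_sums hd₂ hd₃ hd₁))
    (hd.dvd_of_dvd_mul_left (dvd_two_mul_of_dvd_pairwise_sums hd₃ hd₁ hd₂))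

theorem Int.gcd_gcd_eq_one_of_forall_dvd {a b c : ℤ}
    (h : ∀ d : ℤ, d ∣ a → d ∣ b → d ∣ c → IsUnit d) : Int.gcd (Int.gcd a b) c = 1 := by
  have hunit := h _ ((Int.gcd_dvd_left _ _).trans (Int.gcd_dvd_left _ _))
    ((Int.gcd_dvd_left _ _).trans (Int.gcd_dvd_right _ _)) (Int.gcd_dvd_right _ _)
  simpa using Int.ofNat_isUnit.mp hunit

/-- For pairwise coprime positive integers `p₁, p₂, p₃`, the weights
`qᵢ = (p_{i+1}+p_{i+2})/2` (if all `pᵢ` are odd) or `qᵢ = p_{i+1}+p_{i+2}` (otherwise)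
are well-defined positive integers (each `p_{i+1}+p_{i+2}` being even in the odd case),
and `gcd(q₁, q₂, q₃) = 1`. -/
theorem stmt_8 (p₁ p₂ p₃ : ℤ) (h₁ : 0 < p₁) (h₂ : 0 < p₂) (h₃ : 0 < p₃)
    (h₁₂ : IsCoprime p₁ p₂) (h₁₃ : IsCoprime p₁ p₃) (h₂₃ : IsCoprime p₂ p₃)
    (q₁ q₂ q₃ : ℤ)
    (hq₁ : q₁ = if Odd p₁ ∧ Odd p₂ ∧ Odd p₃ then (p₂ + p₃) / 2 else p₂ + p₃)
    (hq₂ : q₂ = if Odd p₁ ∧ Odd p₂ ∧ Odd p₃ then (p₃ + p₁) / 2 else p₃ + p₁)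
    (hq₃ : q₃ = if Odd p₁ ∧ Odd p₂ ∧ Odd p₃ then (p₁ + p₂) / 2 else p₁ + p₂) :
    ((Odd p₁ ∧ Odd p₂ ∧ Odd p₃) → (2 ∣ p₂ + p₃ ∧ 2 ∣ p₃ + p₁ ∧ 2 ∣ p₁ + p₂)) ∧
    0 < q₁ ∧ 0 < q₂ ∧ 0 < q₃ ∧ Int.gcd (Int.gcd q₁ q₂) q₃ = 1 := by
  by_cases hodd : Odd p₁ ∧ Odd p₂ ∧ Odd p₃
  · obtain ⟨o₁, o₂, o₃⟩ := hodd
    rw [if_pos ⟨o₁, o₂, o₃⟩] at hq₁ hq₂ hq₃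
    have e₁ : 2 ∣ p₂ + p₃ := (o₂.add_odd o₃).two_dvd
    have e₂ : 2 ∣ p₃ + p₁ := (o₃.add_odd o₁).two_dvd
    have e₃ : 2 ∣ p₁ + p₂ := (o₁.add_odd o₂).two_dvd
    have k₁ : 2 * q₁ = p₂ + p₃ := hq₁ ▸ Int.mul_ediv_cancel' e₁
    have k₂ : 2 * q₂ = p₃ + p₁ := hq₂ ▸ Int.mul_ediv_cancel' e₂
    have k₃ : 2 * q₃ = p₁ + p₂ := hq₃ ▸ Int.mul_ediv_cancel' e₃
    refine ⟨fun _ => ⟨e₁, e₂, e₃⟩, by omega, by omega, by omega,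
      Int.gcd_gcd_eq_one_of_forall_dvd fun d d₁ d₂ d₃ => h₁₂.isUnit_of_dvd' ?_ ?_⟩
    · exact (show q₂ + q₃ - q₁ = p₁ by omega) ▸ dvd_sub (dvd_add d₂ d₃) d₁
    · exact (show q₃ + q₁ - q₂ = p₂ by omega) ▸ dvd_sub (dvd_add d₃ d₁) d₂
  · rw [if_neg hodd] at hq₁ hq₂ hq₃
    subst hq₁ hq₂ hq₃
    refine ⟨fun h => absurd h hodd, by omega, by omega, by omega,
      Int.gcd_gcd_eq_one_of_forall_dvd fun d d₁ d₂ d₃ => ?_⟩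
    rcases Int.even_or_odd p₁ with e₁ | o₁
    · exact Int.isUnit_of_dvd_pairwise_sums h₂₃ e₁ (Int.odd_of_isCoprime_of_even h₁₂ e₁) d₁ d₂ d₃
    rcases Int.even_or_odd p₂ with e₂ | o₂
    · exact Int.isUnit_of_dvd_pairwise_sums h₁₃.symm e₂ (Int.odd_of_isCoprime_of_even h₂₃ e₂)
        d₂ d₃ d₁
    rcases Int.even_or_odd p₃ with e₃ | o₃
    · exact Int.isUnit_of_dvd_pairwise_sums h₁₂ e₃ o₁ d₃ d₁ d₂
    · exact absurd ⟨o₁, o₂, o₃⟩ hodd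
end

section
/- If A, B, C : [t₀, ∞) → ℝ is a solution of A' = (2A²−B²−C²)/(BC), B' = (B²−C²−2A²)/(CA), C' = (C²−2A²−B²)/(AB) (with A,B,C ≠ 0 on (t₀,∞)) satisfying the boundary conditions B(t₀) = C(t₀) ≠ 0 and the solution extends continuously with B'(t₀) = C'(t₀) = 0 and A(t₀) = 0, then the difference function D = B² − C² vanishes at t₀ together with its derivative; and if additionally B, C, A have fixed sign on (t₀, ∞), then D ≡ 0 on [t₀, ∞), i.e., B = C everywhere (uniqueness of the B = C solution under the regularity boundary conditions). -/
/-!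
`D = B - C` solves the linear equation `D' = g D` with `g = ((B + C)² - 2A²) / (ABC)`.
The coefficient is singular at `t₀`, but there `A' → -2`, so `A < 0` just after `t₀` and
`g → -∞`. Hence `g` is bounded above on every `(t₀, T)`, which is all a Grönwall argument
needs: `exp (-2Kt) D²` is nonincreasing, and `D (t₀) = 0`.
-/

open Set Topology Real

lemma ne_zero_of_pos_or_neg {α β : Type*} [Preorder β] [Zero β] {f : α → β} {s : Set α}
    (h : (∀ t ∈ s, 0 < f t) ∨ (∀ t ∈ s, f t < 0)) : ∀ t ∈ s, f t ≠ 0 := by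
  rcases h with h | h <;> intro t ht
  exacts [(h t ht).ne', (h t ht).ne]

theorem eqOn_zero_of_hasDerivAt_mul_of_bddAbove {D g : ℝ → ℝ} {a b : ℝ}
    (hcont : ContinuousOn D (Icc a b)) (hderiv : ∀ x ∈ Ioo a b, HasDerivAt D (g x * D x) x)
    (hg : BddAbove (g '' Ioo a b)) (ha : D a = 0) : EqOn D 0 (Icc a b) := by
  obtain ⟨K, hK⟩ := hg
  -- the derivative of `F` is `2 exp (-2 K x) (g - K) D² ≤ 0`
  set F : ℝ → ℝ := fun x => exp (-(2 * K) * x) * D x ^ 2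
  have hF : AntitoneOn F (Icc a b) := by
    refine antitoneOn_of_hasDerivWithinAt_nonpos (convex_Icc a b) (by fun_prop)
      (f' := fun x => 2 * exp (-(2 * K) * x) * (g x - K) * D x ^ 2) (fun x hx => ?_)
      (fun x hx => ?_) <;> rw [interior_Icc] at hx
    · have h := ((hasDerivAt_id' x).const_mul (-(2 * K))).exp.fun_mul
        ((hderiv x hx).fun_pow 2)
      refine (h.congr_deriv ?_).hasDerivWithinAt
      norm_num
      ring
    · have : g x ≤ K := hK (mem_image_of_mem g hx)
      have : 0 ≤ 2 * exp (-(2 * K) * x) * D x ^ 2 := by positivity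
      nlinarith
  intro x hx
  have hFx : F x ≤ 0 := by
    simpa [F, ha] using hF (left_mem_Icc.2 (hx.1.trans hx.2)) hx hx.1
  have : D x ^ 2 ≤ 0 := nonpos_of_mul_nonpos_right hFx (exp_pos _)
  exact pow_eq_zero_iff two_ne_zero |>.1 (le_antisymm this (sq_nonneg _))

noncomputable def diffCoeff (A B C : ℝ → ℝ) (t : ℝ) : ℝ :=
  ((B t + C t) ^ 2 - 2 * A t ^ 2) / (A t * B t * C t)

lemma hasDerivAt_sub_eq_diffCoeff_mul {A B C : ℝ → ℝ} {t : ℝ}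
    (hAt : A t ≠ 0) (hBt : B t ≠ 0) (hCt : C t ≠ 0)
    (hB : HasDerivAt B ((B t ^ 2 - C t ^ 2 - 2 * A t ^ 2) / (C t * A t)) t)
    (hC : HasDerivAt C ((C t ^ 2 - 2 * A t ^ 2 - B t ^ 2) / (A t * B t)) t) :
    HasDerivAt (fun s => B s - C s) (diffCoeff A B C t * (B t - C t)) t := by
  refine (hB.fun_sub hC).congr_deriv ?_
  unfold diffCoeff
  field_simp
  ring

lemma continuousOn_diffCoeff {A B C : ℝ → ℝ} {s : Set ℝ}
    (hA : ContinuousOn A s) (hB : ContinuousOn B s) (hC : ContinuousOn C s)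
    (hA₀ : ∀ t ∈ s, A t ≠ 0) (hB₀ : ∀ t ∈ s, B t ≠ 0) (hC₀ : ∀ t ∈ s, C t ≠ 0) :
    ContinuousOn (diffCoeff A B C) s :=
  ContinuousOn.div (by fun_prop) (by fun_prop) fun t ht =>
    mul_ne_zero (mul_ne_zero (hA₀ t ht) (hB₀ t ht)) (hC₀ t ht)

lemma exists_diffCoeff_neg_on_Ioc {A B C : ℝ → ℝ} {t₀ : ℝ}
    (hAcont : ContinuousOn A (Ici t₀)) (hBcont : ContinuousOn B (Ici t₀))
    (hCcont : ContinuousOn C (Ici t₀))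
    (hA : ∀ t ∈ Ioi t₀, HasDerivAt A ((2 * A t ^ 2 - B t ^ 2 - C t ^ 2) / (B t * C t)) t)
    (hA₀ : A t₀ = 0) (hBC₀ : B t₀ = C t₀) (hB₀ : B t₀ ≠ 0) :
    ∃ t₁ > t₀, ∀ t ∈ Ioc t₀ t₁, diffCoeff A B C t < 0 := by
  have hA' := hAcont.continuousWithinAt self_mem_Ici
  have hB' := hBcont.continuousWithinAt self_mem_Ici
  have hC' := hCcont.continuousWithinAt self_mem_Ici
  have hB₀sq : 0 < B t₀ ^ 2 := by positivity
  -- at `t₀` these three quantities equal `B t₀ ^ 2`, `-2 B t₀ ^ 2` and `4 B t₀ ^ 2`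
  have hnear : ∀ᶠ t in 𝓝[≥] t₀, 0 < B t * C t ∧ 2 * A t ^ 2 - B t ^ 2 - C t ^ 2 < 0 ∧
      0 < (B t + C t) ^ 2 - 2 * A t ^ 2 := by
    refine ((hB'.mul hC').eventually (lt_mem_nhds ?_)).and
      ((((hA'.pow 2).const_mul 2 |>.sub (hB'.pow 2)).sub (hC'.pow 2) |>.eventually
        (gt_mem_nhds ?_)).and (((hB'.add hC').pow 2 |>.sub ((hA'.pow 2).const_mul 2)).eventually
          (lt_mem_nhds ?_))) <;>
      simp only [Pi.mul_apply, Pi.sub_apply, Pi.add_apply, Pi.pow_apply, hA₀, ← hBC₀] <;>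
      nlinarith
  obtain ⟨t₁, ht₁, hsub⟩ := mem_nhdsGE_iff_exists_Icc_subset.1 hnear
  have hAanti : StrictAntiOn A (Icc t₀ t₁) := by
    refine strictAntiOn_of_hasDerivWithinAt_neg (convex_Icc t₀ t₁)
      (hAcont.mono Icc_subset_Ici_self)
      (f' := fun t => (2 * A t ^ 2 - B t ^ 2 - C t ^ 2) / (B t * C t))
      (fun t ht => ?_) (fun t ht => ?_) <;> rw [interior_Icc] at ht
    · exact (hA t ht.1).hasDerivWithinAt
    · obtain ⟨hBC, hnum, -⟩ := hsub (Ioo_subset_Icc_self ht)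
      exact div_neg_of_neg_of_pos hnum hBC
  refine ⟨t₁, ht₁, fun t ht => ?_⟩
  obtain ⟨hBC, -, hnum⟩ := hsub (Ioc_subset_Icc_self ht)
  have hAt : A t < 0 := hA₀ ▸ hAanti (left_mem_Icc.2 ht₁.le) (Ioc_subset_Icc_self ht) ht.1
  exact div_neg_of_pos_of_neg hnum (by rw [mul_assoc]; exact mul_neg_of_neg_of_pos hAt hBC)

lemma bddAbove_image_Ioo_of_neg_of_continuousOn {g : ℝ → ℝ} {a b c : ℝ}
    (hneg : ∀ t ∈ Ioc a b, g t < 0) (hcont : ContinuousOn g (Icc b c)) :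
    BddAbove (g '' Ioo a c) := by
  refine ((bddAbove_Iic (a := 0)).union (isCompact_Icc.bddAbove_image hcont)).mono ?_
  rintro _ ⟨x, hx, rfl⟩
  rcases le_or_gt x b with hxb | hxb
  · exact Or.inl (hneg x ⟨hx.1, hxb⟩).le
  · exact Or.inr (mem_image_of_mem g ⟨hxb.le, hx.2.le⟩)

theorem stmt_19_general (t₀ : ℝ) (A B C : ℝ → ℝ)
    (hAcont : ContinuousOn A (Set.Ici t₀)) (hBcont : ContinuousOn B (Set.Ici t₀))
    (hCcont : ContinuousOn C (Set.Ici t₀))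
    (hA : ∀ t ∈ Set.Ioi t₀,
      HasDerivAt A ((2 * A t ^ 2 - B t ^ 2 - C t ^ 2) / (B t * C t)) t)
    (hB : ∀ t ∈ Set.Ioi t₀,
      HasDerivAt B ((B t ^ 2 - C t ^ 2 - 2 * A t ^ 2) / (C t * A t)) t)
    (hC : ∀ t ∈ Set.Ioi t₀,
      HasDerivAt C ((C t ^ 2 - 2 * A t ^ 2 - B t ^ 2) / (A t * B t)) t)
    (hA₀ : A t₀ = 0) (hBC₀ : B t₀ = C t₀) (hB₀ : B t₀ ≠ 0)
    (hAsign : (∀ t ∈ Set.Ioi t₀, 0 < A t) ∨ (∀ t ∈ Set.Ioi t₀, A t < 0))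
    (hBsign : (∀ t ∈ Set.Ioi t₀, 0 < B t) ∨ (∀ t ∈ Set.Ioi t₀, B t < 0))
    (hCsign : (∀ t ∈ Set.Ioi t₀, 0 < C t) ∨ (∀ t ∈ Set.Ioi t₀, C t < 0)) :
    ∀ t ∈ Set.Ici t₀, B t = C t := by
  have hAne := ne_zero_of_pos_or_neg hAsign
  have hBne := ne_zero_of_pos_or_neg hBsign
  have hCne := ne_zero_of_pos_or_neg hCsign
  have hcont : ContinuousOn (diffCoeff A B C) (Ioi t₀) :=
    continuousOn_diffCoeff (hAcont.mono Ioi_subset_Ici_self) (hBcont.mono Ioi_subset_Ici_self)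
      (hCcont.mono Ioi_subset_Ici_self) hAne hBne hCne
  obtain ⟨t₁, ht₁, hneg⟩ := exists_diffCoeff_neg_on_Ioc hAcont hBcont hCcont hA hA₀ hBC₀ hB₀
  intro t ht
  have hbdd : BddAbove (diffCoeff A B C '' Ioo t₀ (max t t₁)) :=
    bddAbove_image_Ioo_of_neg_of_continuousOn hneg
      (hcont.mono fun x hx => ht₁.trans_le hx.1)
  have hzero := eqOn_zero_of_hasDerivAt_mul_of_bddAbove
    ((hBcont.sub hCcont).mono Icc_subset_Ici_self)
    (fun x hx => hasDerivAt_sub_eq_diffCoeff_mul (hAne x hx.1) (hBne x hx.1) (hCne x hx.1)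
      (hB x hx.1) (hC x hx.1)) hbdd (sub_eq_zero.2 hBC₀) ⟨ht, le_max_left t t₁⟩
  exact sub_eq_zero.1 hzero

/-- Uniqueness of the `B = C` solution under the regularity boundary conditions:
if `A, B, C` solve the G₂ ODE system on `(t₀, ∞)`, are continuous on `[t₀, ∞)` with
`A(t₀) = 0`, `B(t₀) = C(t₀) ≠ 0`, `B'(t₀) = C'(t₀) = 0` (one-sided derivatives), and
`A`, `B`, `C` each have fixed sign on `(t₀, ∞)`, then `B = C` on all of `[t₀, ∞)`. -/
theorem stmt_19 (t₀ : ℝ) (A B C : ℝ → ℝ)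
    (hAcont : ContinuousOn A (Set.Ici t₀)) (hBcont : ContinuousOn B (Set.Ici t₀))
    (hCcont : ContinuousOn C (Set.Ici t₀))
    (hA : ∀ t ∈ Set.Ioi t₀,
      HasDerivAt A ((2 * A t ^ 2 - B t ^ 2 - C t ^ 2) / (B t * C t)) t)
    (hB : ∀ t ∈ Set.Ioi t₀,
      HasDerivAt B ((B t ^ 2 - C t ^ 2 - 2 * A t ^ 2) / (C t * A t)) t)
    (hC : ∀ t ∈ Set.Ioi t₀,
      HasDerivAt C ((C t ^ 2 - 2 * A t ^ 2 - B t ^ 2) / (A t * B t)) t)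
    (hA₀ : A t₀ = 0) (hBC₀ : B t₀ = C t₀) (hB₀ : B t₀ ≠ 0)
    (hB'₀ : HasDerivWithinAt B 0 (Set.Ici t₀) t₀)
    (hC'₀ : HasDerivWithinAt C 0 (Set.Ici t₀) t₀)
    (hAsign : (∀ t ∈ Set.Ioi t₀, 0 < A t) ∨ (∀ t ∈ Set.Ioi t₀, A t < 0))
    (hBsign : (∀ t ∈ Set.Ioi t₀, 0 < B t) ∨ (∀ t ∈ Set.Ioi t₀, B t < 0))
    (hCsign : (∀ t ∈ Set.Ioi t₀, 0 < C t) ∨ (∀ t ∈ Set.Ioi t₀, C t < 0)) :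
    ∀ t ∈ Set.Ici t₀, B t = C t :=
  stmt_19_general t₀ A B C hAcont hBcont hCcont hA hB hC hA₀ hBC₀ hB₀ hAsign hBsign hCsign
end
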